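/- arXiv:1812.06914 — 4 statements merged into one kernel-verified Lean document; each statement's English description precedes it below -/
import Mathlib

section
/- Let g be a 2-dimensional restricted Lie algebra over an algebraically closed field of characteristic p > 0. If g possesses at least two distinct lines of additive type (i.e., two linearly independent elements v with v^[p] = 0), and g is one of the five types in the standard classification of 2-dimensional restricted Lie algebras, then g is abelian with identically zero p-power map; in particular every line of g is p-closed of additive type. -/
/-!
If `Z Y - Y Z = Y` then `Y (Z + 1) = Z Y`, so `Y (Z ^ p + 1) = Z ^ p Y` in characteristic `p`;
hence in the non-abelian type no element with `P z = 0` has a nonzero `x`-coordinate. In the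
abelian types `P` is `p`-semilinear, `P (α x + β y) = α ^ p P x + β ^ p P y`, which gives the same
conclusion unless `P x = P y = 0`. So outside the abelian type with `P = 0`, every element with
`P z = 0` lies on the line `k ∙ y`, which cannot contain two independent vectors.
-/

theorem eq_zero_of_mul_sub_mul_eq_self_of_pow_char_eq_zero {A : Type*} [Ring A] {p : ℕ}
    [Fact p.Prime] [CharP A p] {Z Y : A} (h : Z * Y - Y * Z = Y) (hZ : Z ^ p = 0) : Y = 0 := by
  have hsemiconj : SemiconjBy Y (Z + 1) Z := by
    rw [SemiconjBy, mul_add, mul_one, sub_eq_iff_eq_add'.mp h]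
  have hpow := hsemiconj.pow_right p
  rwa [SemiconjBy, add_pow_char_of_commute p (Commute.one_right Z), one_pow, hZ, zero_add,
    mul_one, zero_mul] at hpow

theorem not_linearIndependent_of_mem_span_singleton {k V : Type*} [Field k] [AddCommGroup V]
    [Module k V] {v w y : V} (hv : v ∈ k ∙ y) (hw : w ∈ k ∙ y) :
    ¬ LinearIndependent k ![v, w] := by
  intro hvw
  obtain ⟨a, rfl⟩ := Submodule.mem_span_singleton.mp hv
  obtain ⟨b, rfl⟩ := Submodule.mem_span_singleton.mp hw
  have hcomb : b • a • y + (-a) • b • y = 0 := by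
    rw [smul_smul, smul_smul, mul_comm, neg_mul, neg_smul, add_neg_cancel]
  obtain ⟨-, ha⟩ := LinearIndependent.pair_iff.mp hvw b (-a) hcomb
  exact hvw.ne_zero 0 (by simp [neg_eq_zero.mp ha])

structure IsRestrictedEmbedding {k L A : Type*} [Field k] [LieRing L] [LieAlgebra k L] [Ring A]
    [Algebra k A] (p : ℕ) (ι : L →ₗ[k] A) (P : L → L) : Prop where
  injective : Function.Injective ι
  map_lie : ∀ v w : L, ι ⁅v, w⁆ = ι v * ι w - ι w * ι v
  map_pmap : ∀ v : L, ι (P v) = ι v ^ p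

namespace IsRestrictedEmbedding

variable {k L A : Type*} [Field k] [LieRing L] [LieAlgebra k L] [Ring A] [Algebra k A] {p : ℕ}
  {ι : L →ₗ[k] A} {P : L → L}

theorem commute_of_lie_eq_zero (h : IsRestrictedEmbedding p ι P) {x y : L} (hxy : ⁅x, y⁆ = 0) :
    Commute (ι x) (ι y) :=
  sub_eq_zero.mp (by rw [← h.map_lie, hxy, map_zero])

theorem pmap_smul_add_smul [Fact p.Prime] [CharP A p] (h : IsRestrictedEmbedding p ι P)
    {x y : L} (hxy : ⁅x, y⁆ = 0) (α β : k) :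
    P (α • x + β • y) = α ^ p • P x + β ^ p • P y := by
  have hcomm := ((h.commute_of_lie_eq_zero hxy).smul_left α).smul_right β
  apply h.injective
  simp only [h.map_pmap, map_add, map_smul, add_pow_char_of_commute p hcomm, smul_pow]

theorem eq_zero_of_lie_eq_smul [Fact p.Prime] [CharP A p] (h : IsRestrictedEmbedding p ι P)
    {z y : L} {α : k} (hα : α ≠ 0) (hzy : ⁅z, y⁆ = α • y) (hz : P z = 0) : y = 0 := by
  refine h.injective (map_zero ι ▸ eq_zero_of_mul_sub_mul_eq_self_of_pow_char_eq_zero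
    (p := p) (Z := α⁻¹ • ι z) ?_ ?_)
  · rw [smul_mul_assoc, mul_smul_comm, ← smul_sub, ← h.map_lie, hzy, map_smul, smul_smul,
      inv_mul_cancel₀ hα, one_smul]
  · rw [smul_pow, ← h.map_pmap, hz, map_zero, smul_zero]

theorem coeff_eq_zero_of_lie_eq_self [Fact p.Prime] [CharP A p]
    (h : IsRestrictedEmbedding p ι P) {x y : L} (hxy : ⁅x, y⁆ = y) (hy : y ≠ 0) {α β : k}
    (hz : P (α • x + β • y) = 0) : α = 0 := by
  by_contra hα
  refine hy (h.eq_zero_of_lie_eq_smul hα ?_ hz)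
  rw [add_lie, smul_lie, smul_lie, hxy, lie_self, smul_zero, add_zero]

theorem coeff_eq_zero_of_lie_eq_zero [Fact p.Prime] [CharP A p]
    (h : IsRestrictedEmbedding p ι P) {x y : L} (hxy : ⁅x, y⁆ = 0) (hPx : P x ∉ k ∙ P y)
    {α β : k} (hz : P (α • x + β • y) = 0) : α = 0 := by
  rw [h.pmap_smul_add_smul hxy] at hz
  by_contra hα
  refine hPx (Submodule.mem_span_singleton.mpr ⟨-(α ^ p)⁻¹ * β ^ p, ?_⟩)
  rw [mul_smul, neg_smul, ← smul_neg, ← eq_neg_of_add_eq_zero_left hz, smul_smul,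
    inv_mul_cancel₀ (pow_ne_zero p hα), one_smul]

end IsRestrictedEmbedding

section

variable {k L : Type*} [Field k] [LieRing L] [LieAlgebra k L]

theorem exists_smul_add_smul_eq {x y : L} (hspan : Submodule.span k ({x, y} : Set L) = ⊤)
    (z : L) : ∃ α β : k, α • x + β • y = z :=
  Submodule.mem_span_pair.mp (hspan ▸ Submodule.mem_top)

theorem lie_eq_zero_of_span_pair_eq_top {x y : L} (hspan : Submodule.span k ({x, y} : Set L) = ⊤)
    (hxy : ⁅x, y⁆ = 0) (a b : L) : ⁅a, b⁆ = 0 := by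
  obtain ⟨α, β, rfl⟩ := exists_smul_add_smul_eq hspan a
  obtain ⟨γ, δ, rfl⟩ := exists_smul_add_smul_eq hspan b
  have hyx : ⁅y, x⁆ = 0 := by rw [← lie_skew, hxy, neg_zero]
  simp [hxy, hyx]

theorem mem_span_singleton_of_coeff_eq_zero {P : L → L} {x y : L}
    (hspan : Submodule.span k ({x, y} : Set L) = ⊤)
    (hcoeff : ∀ α β : k, P (α • x + β • y) = 0 → α = 0) {z : L} (hz : P z = 0) : z ∈ k ∙ y := by
  obtain ⟨α, β, rfl⟩ := exists_smul_add_smul_eq hspan z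
  rw [hcoeff α β hz, zero_smul, zero_add]
  exact Submodule.smul_mem _ β (Submodule.mem_span_singleton_self y)

end

theorem stmt_3_general {k : Type*} [Field k] {p : ℕ} (hp : p.Prime) [CharP k p]
    {L : Type*} [LieRing L] [LieAlgebra k L] (P : L → L)
    (A : Type*) [Ring A] [Algebra k A] (ι : L →ₗ[k] A)
    (hinj : Function.Injective ι)
    (hbrk : ∀ v w : L, ι ⁅v, w⁆ = ι v * ι w - ι w * ι v)
    (hpow : ∀ v : L, ι (P v) = ι v ^ p)
    (hclass : ∃ x y : L, LinearIndependent k ![x, y] ∧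
      Submodule.span k ({x, y} : Set L) = ⊤ ∧
      ((⁅x, y⁆ = y ∧ P x = x ∧ P y = 0) ∨
       (⁅x, y⁆ = 0 ∧ P x = 0 ∧ P y = 0) ∨
       (⁅x, y⁆ = 0 ∧ P x = x ∧ P y = 0) ∨
       (⁅x, y⁆ = 0 ∧ P x = y ∧ P y = 0) ∨
       (⁅x, y⁆ = 0 ∧ P x = x ∧ P y = y)))
    (v w : L) (hvw : LinearIndependent k ![v, w])
    (hv : P v = 0) (hw : P w = 0) :
    (∀ a b : L, ⁅a, b⁆ = 0) ∧ (∀ u : L, P u = 0) := by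
  have hι : IsRestrictedEmbedding p ι P := ⟨hinj, hbrk, hpow⟩
  have : Fact p.Prime := ⟨hp⟩
  have : Nontrivial A := nontrivial_of_ne (ι v) 0 fun h => hvw.ne_zero 0 (hinj (by simpa using h))
  have : CharP A p := charP_of_injective_algebraMap' k p
  obtain ⟨x, y, hxy, hspan, htype⟩ := hclass
  have hx : x ≠ 0 := by simpa using hxy.ne_zero 0
  have hy : y ≠ 0 := by simpa using hxy.ne_zero 1
  have hcoeff : ¬ ∀ α β : k, P (α • x + β • y) = 0 → α = 0 := fun hcoeff_zero =>
    not_linearIndependent_of_mem_span_singleton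
      (mem_span_singleton_of_coeff_eq_zero hspan hcoeff_zero hv)
      (mem_span_singleton_of_coeff_eq_zero hspan hcoeff_zero hw) hvw
  rcases htype with ⟨hlie, -, -⟩ | ⟨hlie, hPx, hPy⟩ | ⟨hlie, hPx, hPy⟩ | ⟨hlie, hPx, hPy⟩ |
    ⟨hlie, hPx, hPy⟩
  · exact absurd (fun _ _ => hι.coeff_eq_zero_of_lie_eq_self hlie hy) hcoeff
  · refine ⟨lie_eq_zero_of_span_pair_eq_top hspan hlie, fun u => ?_⟩
    obtain ⟨α, β, rfl⟩ := exists_smul_add_smul_eq hspan u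
    simp [hι.pmap_smul_add_smul hlie, hPx, hPy]
  · exact absurd (fun _ _ => hι.coeff_eq_zero_of_lie_eq_zero hlie (by simpa [hPx, hPy])) hcoeff
  · exact absurd (fun _ _ => hι.coeff_eq_zero_of_lie_eq_zero hlie (by simpa [hPx, hPy])) hcoeff
  · refine absurd (fun _ _ => hι.coeff_eq_zero_of_lie_eq_zero hlie ?_) hcoeff
    rw [hPx, hPy]
    simpa using hxy.notMem_span_image (s := {1}) (x := 0) (by simp)

/-- If a 2-dimensional restricted Lie algebra (one of the five
standard types) has two distinct lines of additive type (two linearly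
independent elements killed by the p-power map `P`), then it is abelian with
identically zero p-power map; in particular every line is p-closed of
additive type.  The restricted structure is encoded by a faithful embedding
into an associative algebra. -/
theorem stmt_3 {k : Type*} [Field k] [IsAlgClosed k] {p : ℕ} (hp : p.Prime) [CharP k p]
    {L : Type*} [LieRing L] [LieAlgebra k L] (P : L → L)
    (A : Type*) [Ring A] [Algebra k A] (ι : L →ₗ[k] A)
    (hinj : Function.Injective ι)
    (hbrk : ∀ v w : L, ι ⁅v, w⁆ = ι v * ι w - ι w * ι v)
    (hpow : ∀ v : L, ι (P v) = ι v ^ p)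
    (hclass : ∃ x y : L, LinearIndependent k ![x, y] ∧
      Submodule.span k ({x, y} : Set L) = ⊤ ∧
      ((⁅x, y⁆ = y ∧ P x = x ∧ P y = 0) ∨
       (⁅x, y⁆ = 0 ∧ P x = 0 ∧ P y = 0) ∨
       (⁅x, y⁆ = 0 ∧ P x = x ∧ P y = 0) ∨
       (⁅x, y⁆ = 0 ∧ P x = y ∧ P y = 0) ∨
       (⁅x, y⁆ = 0 ∧ P x = x ∧ P y = y)))
    (v w : L) (hvw : LinearIndependent k ![v, w])
    (hv : P v = 0) (hw : P w = 0) :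
    (∀ a b : L, ⁅a, b⁆ = 0) ∧ (∀ u : L, P u = 0) :=
  stmt_3_general hp P A ι hinj hbrk hpow hclass v w hvw hv hw
end

section
/- Let g be a 2-dimensional restricted Lie algebra over an algebraically closed field of characteristic p > 0, belonging to one of the five standard isomorphism classes. If g has at least 3 distinct p-closed lines, among which at least one is of multiplicative type and at least one of additive type, then g is isomorphic to the non-abelian type with basis x, y, [x,y]=y, x^[p]=x, y^[p]=0; moreover every line of g is p-closed, exactly one line is of additive type, and all other lines are of multiplicative type. -/
/-!
In a basis `x, y` of one of the four abelian models the `p`-map is `p`-semilinear, since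
`(u + w)^p = u^p + w^p` for commuting `u, w` in characteristic `p`. Hence the model with zero
`p`-map has no line of multiplicative type, the torus `x^[p] = x, y^[p] = y` has no line of
additive type, and the two remaining models have at most two `p`-closed lines.

In the non-abelian model `[x, y] = y`, take `v = a x + b y` with `a ≠ 0`. The element `v^[p]`
commutes with `v`, and the centralizer of `v` is `k v`; moreover `v` is not `p`-nilpotent,
because `ad v` has the nonzero eigenvalue `a` on `y`. So `v^[p]` is a nonzero multiple of `v`,
while the `p`-map vanishes on the line `k y`.
-/

open Submodule

section

variable {k L A : Type*} [Field k] [LieRing L] [LieAlgebra k L] [Ring A] [Algebra k A]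

structure IsRestrictedEmbedding_s4 (p : ℕ) (P : L → L) (ι : L →ₗ[k] A) : Prop where
  injective : Function.Injective ι
  map_lie : ∀ v w : L, ι ⁅v, w⁆ = ι v * ι w - ι w * ι v
  map_pMap : ∀ v : L, ι (P v) = ι v ^ p

def IsPClosedLine (P : L → L) (l : Submodule k L) : Prop :=
  ∃ v : L, v ≠ 0 ∧ l = span k {v} ∧ ∃ c : k, P v = c • v

theorem span_singleton_eq_of_mem {v y : L} (hv : v ≠ 0) (hvy : v ∈ span k {y}) :
    span k {v} = span k {y} := by
  obtain ⟨c, rfl⟩ := mem_span_singleton.mp hvy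
  exact span_singleton_smul_eq (IsUnit.mk0 c (by rintro rfl; simp at hv)) y

theorem exists_smul_add_smul_eq_s4 {x y : L} (hspan : span k {x, y} = ⊤) (v : L) :
    ∃ a b : k, a • x + b • y = v :=
  mem_span_pair.mp (hspan ▸ mem_top)

theorem exists_smul_add_smul_eq_of_notMem_span {x y : L} (hspan : span k {x, y} = ⊤) {v : L}
    (hv : v ∉ span k {y}) : ∃ a b : k, a ≠ 0 ∧ a • x + b • y = v := by
  obtain ⟨a, b, rfl⟩ := exists_smul_add_smul_eq_s4 hspan v
  refine ⟨a, b, ?_, rfl⟩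
  rintro rfl
  exact hv (by simpa using smul_mem _ b (mem_span_singleton_self y))

theorem lie_smul_add_smul_of_lie_eq_right {x y : L} (h : ⁅x, y⁆ = y) (a b α β : k) :
    ⁅a • x + b • y, α • x + β • y⁆ = (a * β - b * α) • y := by
  have hyx : ⁅y, x⁆ = -y := by rw [← lie_skew, h]
  simp only [add_lie, lie_add, lie_smul, smul_lie, lie_self, smul_zero, zero_add, add_zero, h,
    hyx, smul_neg, smul_smul]
  module

theorem exists_eq_smul_of_lie_eq_zero {x y : L} (hy : y ≠ 0) (hspan : span k {x, y} = ⊤)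
    (h : ⁅x, y⁆ = y) {v w : L} (hv : v ∉ span k {y}) (hvw : ⁅v, w⁆ = 0) :
    ∃ c : k, w = c • v := by
  obtain ⟨a, b, ha, rfl⟩ := exists_smul_add_smul_eq_of_notMem_span hspan hv
  obtain ⟨α, β, rfl⟩ := exists_smul_add_smul_eq_s4 hspan w
  rw [lie_smul_add_smul_of_lie_eq_right h, smul_eq_zero, or_iff_left hy, sub_eq_zero] at hvw
  refine ⟨α / a, ?_⟩
  rw [smul_add, smul_smul, smul_smul, div_mul_cancel₀ α ha]
  congr 2
  field_simp
  linear_combination hvw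

namespace IsRestrictedEmbedding_s4

variable {p : ℕ} {P : L → L} {ι : L →ₗ[k] A}

theorem charP (hι : IsRestrictedEmbedding_s4 p P ι) [CharP k p] {v : L} (hv : v ≠ 0) :
    CharP A p :=
  have : Nontrivial A := ⟨⟨ι v, 0, fun h => hv (hι.injective (by rw [h, map_zero]))⟩⟩
  charP_of_injective_algebraMap (algebraMap k A).injective p

theorem apply_smul (hι : IsRestrictedEmbedding_s4 p P ι) (c : k) (v : L) :
    P (c • v) = c ^ p • P v :=
  hι.injective (by rw [hι.map_pMap, map_smul, smul_pow, map_smul, hι.map_pMap])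

theorem lie_apply_self (hι : IsRestrictedEmbedding_s4 p P ι) (v : L) : ⁅v, P v⁆ = 0 :=
  hι.injective <| by
    rw [hι.map_lie, hι.map_pMap, map_zero, sub_eq_zero]
    exact Commute.self_pow _ _

theorem apply_add_of_lie_eq_zero (hι : IsRestrictedEmbedding_s4 p P ι) (hp : p.Prime)
    [CharP A p] {v w : L} (h : ⁅v, w⁆ = 0) : P (v + w) = P v + P w := by
  have := Fact.mk hp
  have hvw : Commute (ι v) (ι w) := by
    change ι v * ι w = ι w * ι v
    rw [← sub_eq_zero, ← hι.map_lie, h, map_zero]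
  exact hι.injective (by
    rw [map_add, hι.map_pMap, hι.map_pMap, hι.map_pMap, map_add, add_pow_char_of_commute p hvw])

theorem apply_smul_add_smul (hι : IsRestrictedEmbedding_s4 p P ι) (hp : p.Prime) [CharP A p]
    {x y : L} (h : ⁅x, y⁆ = 0) (a b : k) :
    P (a • x + b • y) = a ^ p • P x + b ^ p • P y := by
  rw [hι.apply_add_of_lie_eq_zero hp (by simp [h]), hι.apply_smul, hι.apply_smul]

theorem apply_ne_zero_of_lie_eq_smul (hι : IsRestrictedEmbedding_s4 p P ι) (hp : p.Prime)
    [CharP A p] {v w : L} {a : k} (hvw : ⁅v, w⁆ = a • w) (ha : a ≠ 0) (hw : w ≠ 0) :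
    P v ≠ 0 := by
  have := Fact.mk hp
  intro hPv
  set t := algebraMap k A a
  have hshift : ι v * ι w = ι w * (ι v + t) := by
    rw [mul_add, ← Algebra.commutes, ← sub_eq_iff_eq_add', ← hι.map_lie, hvw, map_smul,
      Algebra.smul_def]
  have hshift_pow : ∀ n : ℕ, ι v ^ n * ι w = ι w * (ι v + t) ^ n := by
    intro n
    induction n with
    | zero => simp
    | succ n ih => rw [pow_succ, mul_assoc, hshift, ← mul_assoc, ih, mul_assoc, ← pow_succ]
  have hvp : ι v ^ p = 0 := by rw [← hι.map_pMap, hPv, map_zero]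
  have hfrob : (ι v + t) ^ p = algebraMap k A (a ^ p) := by
    rw [add_pow_char_of_commute p (Algebra.commutes a (ι v)).symm, hvp, zero_add, map_pow]
  have hzero : a ^ p • ι w = 0 := by
    rw [Algebra.smul_def, Algebra.commutes, ← hfrob, ← hshift_pow, hvp, zero_mul]
  exact hw (hι.injective (by
    rw [map_zero]; exact (smul_eq_zero.mp hzero).resolve_left (pow_ne_zero p ha)))

theorem apply_eq_zero_of_mem_span (hι : IsRestrictedEmbedding_s4 p P ι) {v y : L}
    (hPy : P y = 0) (hv : v ∈ span k {y}) : P v = 0 := by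
  obtain ⟨c, rfl⟩ := mem_span_singleton.mp hv
  rw [hι.apply_smul, hPy, smul_zero]

theorem exists_apply_eq_smul_of_notMem_span (hι : IsRestrictedEmbedding_s4 p P ι) (hp : p.Prime)
    [CharP A p] {x y : L} (hy : y ≠ 0) (hspan : span k {x, y} = ⊤) (h : ⁅x, y⁆ = y) {v : L}
    (hv : v ∉ span k {y}) : ∃ c : k, c ≠ 0 ∧ P v = c • v := by
  obtain ⟨c, hc⟩ := exists_eq_smul_of_lie_eq_zero hy hspan h hv (hι.lie_apply_self v)
  refine ⟨c, ?_, hc⟩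
  rintro rfl
  obtain ⟨a, b, ha, rfl⟩ := exists_smul_add_smul_eq_of_notMem_span hspan hv
  have hvy : ⁅a • x + b • y, y⁆ = a • y := by simp [h]
  exact hι.apply_ne_zero_of_lie_eq_smul hp hvy ha hy (by rw [hc, zero_smul])

theorem classify_lines_of_lie_eq_right (hι : IsRestrictedEmbedding_s4 p P ι) (hp : p.Prime)
    [CharP A p]
    {x y : L} (hy : y ≠ 0) (hspan : span k {x, y} = ⊤) (h : ⁅x, y⁆ = y) (hPy : P y = 0) :
    (∀ v : L, ∃ c : k, P v = c • v) ∧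
    (∃! l : Submodule k L, ∃ v : L, v ≠ 0 ∧ l = span k {v} ∧ P v = 0) ∧
    (∀ v : L, v ≠ 0 → P v = 0 ∨ ∃ c : k, c ≠ 0 ∧ P v = c • v) := by
  have hadd := fun v (hv : v ∈ span k {y}) => hι.apply_eq_zero_of_mem_span hPy hv
  have hmul := fun v (hv : v ∉ span k {y}) =>
    hι.exists_apply_eq_smul_of_notMem_span hp hy hspan h hv
  refine ⟨fun v => ?_, ⟨span k {y}, ⟨y, hy, rfl, hPy⟩, ?_⟩, fun v _ => ?_⟩
  · by_cases hv : v ∈ span k {y}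
    · exact ⟨0, by rw [hadd v hv, zero_smul]⟩
    · obtain ⟨c, -, hc⟩ := hmul v hv
      exact ⟨c, hc⟩
  · rintro l ⟨v, hv0, rfl, hPv⟩
    refine span_singleton_eq_of_mem hv0 (by_contra fun hv => ?_)
    obtain ⟨c, hc, hPv'⟩ := hmul v hv
    exact hv0 ((smul_eq_zero.mp (hPv' ▸ hPv)).resolve_left hc)
  · by_cases hv : v ∈ span k {y}
    · exact .inl (hadd v hv)
    · exact .inr (hmul v hv)

theorem eq_zero_of_apply_eq_smul (hι : IsRestrictedEmbedding_s4 p P ι) (hp : p.Prime) [CharP A p]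
    {x y : L} (hspan : span k {x, y} = ⊤) (h : ⁅x, y⁆ = 0) (hPx : P x = 0) (hPy : P y = 0)
    {v : L} {c : k} (hc : c ≠ 0) (hPv : P v = c • v) : v = 0 := by
  obtain ⟨a, b, rfl⟩ := exists_smul_add_smul_eq_s4 hspan v
  rw [hι.apply_smul_add_smul hp h, hPx, hPy, smul_zero, smul_zero, add_zero, eq_comm,
    smul_eq_zero] at hPv
  exact hPv.resolve_left hc

theorem eq_zero_of_apply_eq_zero (hι : IsRestrictedEmbedding_s4 p P ι) (hp : p.Prime) [CharP A p]
    {x y : L} (hxy : LinearIndependent k ![x, y]) (hspan : span k {x, y} = ⊤)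
    (h : ⁅x, y⁆ = 0) (hPx : P x = x) (hPy : P y = y) {v : L} (hPv : P v = 0) : v = 0 := by
  obtain ⟨a, b, rfl⟩ := exists_smul_add_smul_eq_s4 hspan v
  rw [hι.apply_smul_add_smul hp h, hPx, hPy] at hPv
  obtain ⟨ha, hb⟩ := LinearIndependent.pair_iff.mp hxy _ _ hPv
  rw [pow_eq_zero_iff hp.ne_zero] at ha hb
  rw [ha, hb, zero_smul, zero_smul, add_zero]

theorem eq_span_or_eq_span_of_isPClosedLine (hι : IsRestrictedEmbedding_s4 p P ι) (hp : p.Prime)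
    [CharP A p] {x y : L} (hxy : LinearIndependent k ![x, y]) (hspan : span k {x, y} = ⊤)
    (h : ⁅x, y⁆ = 0) (hPx : P x = x) (hPy : P y = 0) {l : Submodule k L}
    (hl : IsPClosedLine P l) : l = span k {x} ∨ l = span k {y} := by
  obtain ⟨v, hv, rfl, c, hPv⟩ := hl
  obtain ⟨a, b, rfl⟩ := exists_smul_add_smul_eq_s4 hspan v
  rw [hι.apply_smul_add_smul hp h, hPx, hPy, smul_zero, add_zero, smul_add, smul_smul,
    smul_smul] at hPv
  obtain ⟨hxc, hyc⟩ := hxy.eq_of_pair (s := a ^ p) (t := 0) (s' := c * a) (t' := c * b)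
    (by rw [zero_smul, add_zero, hPv])
  by_cases hc : c = 0
  · rw [hc, zero_mul, pow_eq_zero_iff hp.ne_zero] at hxc
    refine .inr (span_singleton_eq_of_mem hv ?_)
    simpa [hxc] using smul_mem _ b (mem_span_singleton_self y)
  · have hb : b = 0 := (mul_eq_zero.mp hyc.symm).resolve_left hc
    refine .inl (span_singleton_eq_of_mem hv ?_)
    simpa [hb] using smul_mem _ a (mem_span_singleton_self x)

theorem eq_span_of_isPClosedLine (hι : IsRestrictedEmbedding_s4 p P ι) (hp : p.Prime) [CharP A p]
    {x y : L} (hxy : LinearIndependent k ![x, y]) (hspan : span k {x, y} = ⊤)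
    (h : ⁅x, y⁆ = 0) (hPx : P x = y) (hPy : P y = 0) {l : Submodule k L}
    (hl : IsPClosedLine P l) : l = span k {y} := by
  obtain ⟨v, hv, rfl, c, hPv⟩ := hl
  obtain ⟨a, b, rfl⟩ := exists_smul_add_smul_eq_s4 hspan v
  rw [hι.apply_smul_add_smul hp h, hPx, hPy, smul_zero, add_zero, smul_add, smul_smul,
    smul_smul] at hPv
  obtain ⟨hxc, hyc⟩ := hxy.eq_of_pair (s := 0) (t := a ^ p) (s' := c * a) (t' := c * b)
    (by rw [zero_smul, zero_add, hPv])
  have ha : a = 0 := by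
    by_contra ha
    rw [(mul_eq_zero.mp hxc.symm).resolve_right ha, zero_mul, pow_eq_zero_iff hp.ne_zero] at hyc
    exact ha hyc
  refine span_singleton_eq_of_mem hv ?_
  simpa [ha] using smul_mem _ b (mem_span_singleton_self y)

end IsRestrictedEmbedding_s4

end

theorem stmt_4_general {k : Type*} [Field k] {p : ℕ} (hp : p.Prime) [CharP k p]
    {L : Type*} [LieRing L] [LieAlgebra k L] (P : L → L)
    (A : Type*) [Ring A] [Algebra k A] (ι : L →ₗ[k] A)
    (hinj : Function.Injective ι)
    (hbrk : ∀ v w : L, ι ⁅v, w⁆ = ι v * ι w - ι w * ι v)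
    (hpow : ∀ v : L, ι (P v) = ι v ^ p)
    (hclass : ∃ x y : L, LinearIndependent k ![x, y] ∧
      Submodule.span k ({x, y} : Set L) = ⊤ ∧
      ((⁅x, y⁆ = y ∧ P x = x ∧ P y = 0) ∨
       (⁅x, y⁆ = 0 ∧ P x = 0 ∧ P y = 0) ∨
       (⁅x, y⁆ = 0 ∧ P x = x ∧ P y = 0) ∨
       (⁅x, y⁆ = 0 ∧ P x = y ∧ P y = 0) ∨
       (⁅x, y⁆ = 0 ∧ P x = x ∧ P y = y)))
    (l₁ l₂ l₃ : Submodule k L)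
    (h12 : l₁ ≠ l₂) (h13 : l₁ ≠ l₃) (h23 : l₂ ≠ l₃)
    (hl₁ : ∃ v : L, v ≠ 0 ∧ l₁ = Submodule.span k {v} ∧ ∃ c : k, P v = c • v)
    (hl₂ : ∃ v : L, v ≠ 0 ∧ l₂ = Submodule.span k {v} ∧ ∃ c : k, P v = c • v)
    (hl₃ : ∃ v : L, v ≠ 0 ∧ l₃ = Submodule.span k {v} ∧ ∃ c : k, P v = c • v)
    (hmult : ∃ v : L, v ≠ 0 ∧
      (l₁ = Submodule.span k {v} ∨ l₂ = Submodule.span k {v} ∨ l₃ = Submodule.span k {v}) ∧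
      ∃ c : k, c ≠ 0 ∧ P v = c • v)
    (hadd : ∃ v : L, v ≠ 0 ∧
      (l₁ = Submodule.span k {v} ∨ l₂ = Submodule.span k {v} ∨ l₃ = Submodule.span k {v}) ∧
      P v = 0) :
    (∃ x y : L, LinearIndependent k ![x, y] ∧
        Submodule.span k ({x, y} : Set L) = ⊤ ∧
        ⁅x, y⁆ = y ∧ P x = x ∧ P y = 0) ∧
    (∀ v : L, ∃ c : k, P v = c • v) ∧
    (∃! l : Submodule k L, ∃ v : L, v ≠ 0 ∧ l = Submodule.span k {v} ∧ P v = 0) ∧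
    (∀ v : L, v ≠ 0 → P v = 0 ∨ ∃ c : k, c ≠ 0 ∧ P v = c • v) := by
  obtain ⟨x, y, hxy, hspan, hcase⟩ := hclass
  have hι : IsRestrictedEmbedding_s4 p P ι := ⟨hinj, hbrk, hpow⟩
  have hy : y ≠ 0 := hxy.ne_zero 1
  have := hι.charP hy
  rcases hcase with ⟨h, hPx, hPy⟩ | ⟨h, hPx, hPy⟩ | ⟨h, hPx, hPy⟩ | ⟨h, hPx, hPy⟩ |
      ⟨h, hPx, hPy⟩
  · exact ⟨⟨x, y, hxy, hspan, h, hPx, hPy⟩,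
      hι.classify_lines_of_lie_eq_right hp hy hspan h hPy⟩
  · obtain ⟨v, hv, -, c, hc, hPv⟩ := hmult
    exact absurd (hι.eq_zero_of_apply_eq_smul hp hspan h hPx hPy hc hPv) hv
  · have hline := fun l (hl : IsPClosedLine P l) =>
      hι.eq_span_or_eq_span_of_isPClosedLine hp hxy hspan h hPx hPy hl
    rcases hline l₁ hl₁ with rfl | rfl <;> rcases hline l₂ hl₂ with rfl | rfl <;>
      rcases hline l₃ hl₃ with rfl | rfl <;> contradiction
  · have hline := fun l (hl : IsPClosedLine P l) =>
      hι.eq_span_of_isPClosedLine hp hxy hspan h hPx hPy hl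
    exact absurd ((hline l₁ hl₁).trans (hline l₂ hl₂).symm) h12
  · obtain ⟨v, hv, -, hPv⟩ := hadd
    exact absurd (hι.eq_zero_of_apply_eq_zero hp hxy hspan h hPx hPy hPv) hv

/-- If a 2-dimensional restricted Lie algebra (one of the five
standard types) has at least 3 distinct p-closed lines, at least one of
multiplicative type and at least one of additive type, then it is of the
non-abelian type `[x,y]=y`, `x^[p]=x`, `y^[p]=0`; moreover every line is
p-closed, exactly one line is of additive type, and all other lines are of
multiplicative type.  The restricted structure is encoded by a faithful
embedding into an associative algebra. -/
theorem stmt_4 {k : Type*} [Field k] [IsAlgClosed k] {p : ℕ} (hp : p.Prime) [CharP k p]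
    {L : Type*} [LieRing L] [LieAlgebra k L] (P : L → L)
    (A : Type*) [Ring A] [Algebra k A] (ι : L →ₗ[k] A)
    (hinj : Function.Injective ι)
    (hbrk : ∀ v w : L, ι ⁅v, w⁆ = ι v * ι w - ι w * ι v)
    (hpow : ∀ v : L, ι (P v) = ι v ^ p)
    (hclass : ∃ x y : L, LinearIndependent k ![x, y] ∧
      Submodule.span k ({x, y} : Set L) = ⊤ ∧
      ((⁅x, y⁆ = y ∧ P x = x ∧ P y = 0) ∨
       (⁅x, y⁆ = 0 ∧ P x = 0 ∧ P y = 0) ∨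
       (⁅x, y⁆ = 0 ∧ P x = x ∧ P y = 0) ∨
       (⁅x, y⁆ = 0 ∧ P x = y ∧ P y = 0) ∨
       (⁅x, y⁆ = 0 ∧ P x = x ∧ P y = y)))
    (l₁ l₂ l₃ : Submodule k L)
    (h12 : l₁ ≠ l₂) (h13 : l₁ ≠ l₃) (h23 : l₂ ≠ l₃)
    (hl₁ : ∃ v : L, v ≠ 0 ∧ l₁ = Submodule.span k {v} ∧ ∃ c : k, P v = c • v)
    (hl₂ : ∃ v : L, v ≠ 0 ∧ l₂ = Submodule.span k {v} ∧ ∃ c : k, P v = c • v)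
    (hl₃ : ∃ v : L, v ≠ 0 ∧ l₃ = Submodule.span k {v} ∧ ∃ c : k, P v = c • v)
    (hmult : ∃ v : L, v ≠ 0 ∧
      (l₁ = Submodule.span k {v} ∨ l₂ = Submodule.span k {v} ∨ l₃ = Submodule.span k {v}) ∧
      ∃ c : k, c ≠ 0 ∧ P v = c • v)
    (hadd : ∃ v : L, v ≠ 0 ∧
      (l₁ = Submodule.span k {v} ∨ l₂ = Submodule.span k {v} ∨ l₃ = Submodule.span k {v}) ∧
      P v = 0) :
    (∃ x y : L, LinearIndependent k ![x, y] ∧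
        Submodule.span k ({x, y} : Set L) = ⊤ ∧
        ⁅x, y⁆ = y ∧ P x = x ∧ P y = 0) ∧
    (∀ v : L, ∃ c : k, P v = c • v) ∧
    (∃! l : Submodule k L, ∃ v : L, v ≠ 0 ∧ l = Submodule.span k {v} ∧ P v = 0) ∧
    (∀ v : L, v ≠ 0 → P v = 0 ∨ ∃ c : k, c ≠ 0 ∧ P v = c • v) :=
  stmt_4_general hp P A ι hinj hbrk hpow hclass l₁ l₂ l₃ h12 h13 h23 hl₁ hl₂ hl₃ hmult hadd
end

section
/- Let k be an algebraically closed field of characteristic 2 and consider the elliptic surface over Spec k[t] given by the Weierstrass-type equation y^2 + t^6 y + x^3 + (t^2 + t^6)x + t^7 = 0. Define derivations D_1, D_2 on the coordinate ring by D_1(x) = 0, D_1(y) = t^2, D_1(t) = t^2 and D_2(x) = t^4, D_2(y) = t^{-2}(x^2 + t^6), D_2(t) = 1 (the second defined over t ≠ 0). Then D_1 and D_2 are well-defined derivations annihilating the defining equation, they commute, and D_1^2 = D_2^2 = 0; hence every k-linear combination D = e_1 D_1 + e_2 D_2 satisfies D^2 = 0. -/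
/-!
A derivation of `A` that maps an ideal `I = (S)` into itself induces a derivation of `A ⧸ I`,
and it is enough to check `D s ∈ I` on the generators `s ∈ S`. The commutator `⁅D₁, D₂⁆` is
again a derivation, and in characteristic two so is `D ∘ D`; so on a polynomial ring they
vanish as soon as they vanish on the variables. What is left is a finite list of polynomial identities mod 2.
-/

open MvPolynomial

namespace CharTwo

theorem add_self_eq_zero_of_module (R : Type*) [CommRing R] [CharP R 2] {M : Type*}
    [AddCommGroup M] [Module R M] (m : M) :
    m + m = 0 := by
  rw [← two_smul R, CharTwo.two_eq_zero, zero_smul]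

end CharTwo

namespace Derivation

variable {R A : Type*} [CommRing R] [CommRing A] [Algebra R A]

theorem map_mem_span_of_forall_mem (D : Derivation R A A) {S : Set A}
    (hS : ∀ s ∈ S, D s ∈ Ideal.span S) {a : A} (ha : a ∈ Ideal.span S) :
    D a ∈ Ideal.span S := by
  induction ha using Submodule.span_induction with
  | mem s hs => exact hS s hs
  | zero => simp
  | add x y _ _ hx hy => simpa using add_mem hx hy
  | smul c x hx hDx =>
    rw [smul_eq_mul, leibniz]
    exact add_mem (Ideal.mul_mem_left _ _ hDx) (Ideal.mul_mem_right _ _ hx)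

def liftQuotient (D : Derivation R A A) (I : Ideal A) (hD : ∀ a ∈ I, D a ∈ I) :
    Derivation R (A ⧸ I) (A ⧸ I) :=
  Derivation.mk'
    ((Submodule.Quotient.restrictScalarsEquiv R I).toLinearMap ∘ₗ
      (I.restrictScalars R).mapQ (I.restrictScalars R) D.toLinearMap hD ∘ₗ
      (Submodule.Quotient.restrictScalarsEquiv R I).symm.toLinearMap)
    (by
      rintro ⟨a⟩ ⟨b⟩
      change Ideal.Quotient.mk I (D (a * b)) =
        Ideal.Quotient.mk I a • Ideal.Quotient.mk I (D b) +
          Ideal.Quotient.mk I b • Ideal.Quotient.mk I (D a)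
      simp [leibniz])

@[simp]
theorem liftQuotient_mk (D : Derivation R A A) (I : Ideal A) (hD : ∀ a ∈ I, D a ∈ I) (a : A) :
    D.liftQuotient I hD (Ideal.Quotient.mk I a) = Ideal.Quotient.mk I (D a) := rfl

section CharTwo

variable [CharP R 2]

def compSelf (D : Derivation R A A) : Derivation R A A :=
  Derivation.mk' (D.toLinearMap ∘ₗ D.toLinearMap) fun a b => by
    simp only [LinearMap.comp_apply, coeFn_coe, leibniz, map_add, smul_eq_mul]
    linear_combination CharTwo.add_self_eq_zero_of_module R (D a * D b)

@[simp]
theorem compSelf_apply (D : Derivation R A A) (a : A) : D.compSelf a = D (D a) := rfl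

theorem smul_add_smul_comp_self_eq_zero {D₁ D₂ : Derivation R A A}
    (hcomm : ∀ a, D₁ (D₂ a) = D₂ (D₁ a)) (h₁ : ∀ a, D₁ (D₁ a) = 0) (h₂ : ∀ a, D₂ (D₂ a) = 0)
    (e₁ e₂ : R) (a : A) : (e₁ • D₁ + e₂ • D₂) ((e₁ • D₁ + e₂ • D₂) a) = 0 := by
  simp only [add_apply, smul_apply, map_add, map_smul, h₁, h₂, hcomm a, smul_zero, zero_add,
    add_zero]
  rw [smul_comm e₁ e₂, ← smul_add, CharTwo.add_self_eq_zero_of_module R, smul_zero]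

end CharTwo

end Derivation

namespace MvPolynomial

variable {R σ : Type*} [CommRing R]

theorem derivation_comm_of_X {D₁ D₂ : Derivation R (MvPolynomial σ R) (MvPolynomial σ R)}
    (h : ∀ i, D₁ (D₂ (X i)) = D₂ (D₁ (X i))) (p : MvPolynomial σ R) : D₁ (D₂ p) = D₂ (D₁ p) := by
  have : ⁅D₁, D₂⁆ = 0 := derivation_ext fun i => by simp [Derivation.commutator_apply, h]
  simpa [Derivation.commutator_apply, sub_eq_zero] using congr($this p)

theorem derivation_comp_self_eq_zero_of_X [CharP R 2]
    {D : Derivation R (MvPolynomial σ R) (MvPolynomial σ R)}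
    (h : ∀ i, D (D (X i)) = 0) (p : MvPolynomial σ R) : D (D p) = 0 := by
  have : D.compSelf = 0 := derivation_ext fun i => by simp [h]
  simpa using congr($this p)

end MvPolynomial

noncomputable section

variable (k : Type*) [CommRing k]

abbrev weierstrassPoly : MvPolynomial (Fin 4) k :=
  X 1 ^ 2 + X 2 ^ 6 * X 1 + X 0 ^ 3 + (X 2 ^ 2 + X 2 ^ 6) * X 0 + X 2 ^ 7

abbrev surfaceIdeal : Ideal (MvPolynomial (Fin 4) k) :=
  Ideal.span {weierstrassPoly k, X 2 * X 3 - 1}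

-- The values on `s = X 3` are forced by `D (t s) = 0`, i.e. `D s = -s² D t`.
def polyD₁ : Derivation k (MvPolynomial (Fin 4) k) (MvPolynomial (Fin 4) k) :=
  mkDerivation k ![0, X 2 ^ 2, X 2 ^ 2, 1]

def polyD₂ : Derivation k (MvPolynomial (Fin 4) k) (MvPolynomial (Fin 4) k) :=
  mkDerivation k ![X 2 ^ 4, X 3 ^ 2 * (X 0 ^ 2 + X 2 ^ 6), 1, X 3 ^ 2]

end

section

variable {k : Type*} [CommRing k] [CharP k 2]

theorem polyD₁_mem_surfaceIdeal {a : MvPolynomial (Fin 4) k} (ha : a ∈ surfaceIdeal k) :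
    polyD₁ k a ∈ surfaceIdeal k := by
  -- `reduce_mod_char!` reads the characteristic off a local instance.
  have : CharP (MvPolynomial (Fin 4) k) 2 := inferInstance
  refine (polyD₁ k).map_mem_span_of_forall_mem ?_ ha
  have hf : polyD₁ k (weierstrassPoly k) = 0 := by
    simp only [polyD₁, weierstrassPoly, mkDerivation_X, Matrix.cons_val, map_add,
      Derivation.leibniz, Derivation.leibniz_pow, smul_eq_mul, nsmul_eq_mul]
    ring_nf
    reduce_mod_char!
  have hg : polyD₁ k (X 2 * X 3 - 1) = X 2 * (X 2 * X 3 - 1) := by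
    simp only [polyD₁, mkDerivation_X, Matrix.cons_val, map_sub, Derivation.leibniz,
      Derivation.map_one_eq_zero, smul_eq_mul]
    ring_nf
    reduce_mod_char!
  simp only [Set.mem_insert_iff, Set.mem_singleton_iff, forall_eq_or_imp, forall_eq, hf, hg]
  exact ⟨zero_mem _, Ideal.mul_mem_left _ _ (Ideal.subset_span (by simp))⟩

theorem polyD₂_mem_surfaceIdeal {a : MvPolynomial (Fin 4) k} (ha : a ∈ surfaceIdeal k) :
    polyD₂ k a ∈ surfaceIdeal k := by
  have : CharP (MvPolynomial (Fin 4) k) 2 := inferInstance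
  refine (polyD₂ k).map_mem_span_of_forall_mem ?_ ha
  -- `t⁶ D₂ y = t⁴ (x² + t⁶) (t s)²` and `(t s)² - 1 = (t s + 1) (t s - 1)`.
  have hf : polyD₂ k (weierstrassPoly k) =
      (X 0 ^ 2 * X 2 ^ 4 + X 2 ^ 10) * (X 2 * X 3 + 1) * (X 2 * X 3 - 1) := by
    simp only [polyD₂, weierstrassPoly, mkDerivation_X, Matrix.cons_val, map_add,
      Derivation.leibniz, Derivation.leibniz_pow, smul_eq_mul, nsmul_eq_mul]
    ring_nf
    reduce_mod_char!
  have hg : polyD₂ k (X 2 * X 3 - 1) = X 3 * (X 2 * X 3 - 1) := by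
    simp only [polyD₂, mkDerivation_X, Matrix.cons_val, map_sub, Derivation.leibniz,
      Derivation.map_one_eq_zero, smul_eq_mul]
    ring_nf
    reduce_mod_char!
  simp only [Set.mem_insert_iff, Set.mem_singleton_iff, forall_eq_or_imp, forall_eq, hf, hg]
  exact ⟨Ideal.mul_mem_left _ _ (Ideal.subset_span (by simp)),
    Ideal.mul_mem_left _ _ (Ideal.subset_span (by simp))⟩

theorem polyD₁_polyD₂_comm (p : MvPolynomial (Fin 4) k) :
    polyD₁ k (polyD₂ k p) = polyD₂ k (polyD₁ k p) := by
  have : CharP (MvPolynomial (Fin 4) k) 2 := inferInstance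
  refine derivation_comm_of_X (fun i => ?_) p
  fin_cases i <;>
    simp [polyD₁, polyD₂, mkDerivation_X, Derivation.leibniz, Derivation.leibniz_pow] <;>
    ring_nf <;> reduce_mod_char!

theorem polyD₁_comp_self (p : MvPolynomial (Fin 4) k) : polyD₁ k (polyD₁ k p) = 0 := by
  have : CharP (MvPolynomial (Fin 4) k) 2 := inferInstance
  refine derivation_comp_self_eq_zero_of_X (fun i => ?_) p
  fin_cases i <;>
    simp [polyD₁, mkDerivation_X, Derivation.leibniz_pow] <;>
    ring_nf <;> reduce_mod_char!

theorem polyD₂_comp_self (p : MvPolynomial (Fin 4) k) : polyD₂ k (polyD₂ k p) = 0 := by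
  have : CharP (MvPolynomial (Fin 4) k) 2 := inferInstance
  refine derivation_comp_self_eq_zero_of_X (fun i => ?_) p
  fin_cases i <;>
    simp [polyD₂, mkDerivation_X, Derivation.leibniz, Derivation.leibniz_pow] <;>
    ring_nf <;> reduce_mod_char!

end

/-- Variables `x = X 0`, `y = X 1`, `t = X 2`, `s = X 3`; the chart `t ≠ 0` is realized by the
relation `t s = 1`. -/
theorem stmt_16_general {k : Type*} [Field k] [CharP k 2]
    (xq yq tq sq :
      MvPolynomial (Fin 4) k ⧸
        Ideal.span {(X 1 : MvPolynomial (Fin 4) k) ^ 2 + (X 2) ^ 6 * (X 1) + (X 0) ^ 3 +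
          ((X 2) ^ 2 + (X 2) ^ 6) * (X 0) + (X 2) ^ 7, (X 2) * (X 3) - 1})
    (hx : xq = Ideal.Quotient.mk _ (X 0))
    (hy : yq = Ideal.Quotient.mk _ (X 1))
    (ht : tq = Ideal.Quotient.mk _ (X 2))
    (hs : sq = Ideal.Quotient.mk _ (X 3)) :
    ∃ D₁ D₂ :
      Derivation k
        (MvPolynomial (Fin 4) k ⧸
          Ideal.span {(X 1 : MvPolynomial (Fin 4) k) ^ 2 + (X 2) ^ 6 * (X 1) + (X 0) ^ 3 +
            ((X 2) ^ 2 + (X 2) ^ 6) * (X 0) + (X 2) ^ 7, (X 2) * (X 3) - 1})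
        (MvPolynomial (Fin 4) k ⧸
          Ideal.span {(X 1 : MvPolynomial (Fin 4) k) ^ 2 + (X 2) ^ 6 * (X 1) + (X 0) ^ 3 +
            ((X 2) ^ 2 + (X 2) ^ 6) * (X 0) + (X 2) ^ 7, (X 2) * (X 3) - 1}),
      D₁ xq = 0 ∧ D₁ yq = tq ^ 2 ∧ D₁ tq = tq ^ 2 ∧
      D₂ xq = tq ^ 4 ∧ D₂ yq = sq ^ 2 * (xq ^ 2 + tq ^ 6) ∧ D₂ tq = 1 ∧
      (∀ b, D₁ (D₂ b) = D₂ (D₁ b)) ∧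
      (∀ b, D₁ (D₁ b) = 0) ∧ (∀ b, D₂ (D₂ b) = 0) ∧
      (∀ e₁ e₂ : k, ∀ b,
        (e₁ • D₁ + e₂ • D₂) ((e₁ • D₁ + e₂ • D₂) b) = 0) := by
  subst hx hy ht hs
  set E₁ := (polyD₁ k).liftQuotient (surfaceIdeal k) fun _ => polyD₁_mem_surfaceIdeal
  set E₂ := (polyD₂ k).liftQuotient (surfaceIdeal k) fun _ => polyD₂_mem_surfaceIdeal
  have hcomm : ∀ b, E₁ (E₂ b) = E₂ (E₁ b) :=
    Ideal.Quotient.mk_surjective.forall.2 fun p => by simp [E₁, E₂, polyD₁_polyD₂_comm]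
  have h₁ : ∀ b, E₁ (E₁ b) = 0 :=
    Ideal.Quotient.mk_surjective.forall.2 fun p => by simp [E₁, polyD₁_comp_self]
  have h₂ : ∀ b, E₂ (E₂ b) = 0 :=
    Ideal.Quotient.mk_surjective.forall.2 fun p => by simp [E₂, polyD₂_comp_self]
  refine ⟨E₁, E₂, ?_, ?_, ?_, ?_, ?_, ?_, hcomm, h₁, h₂,
    Derivation.smul_add_smul_comp_self_eq_zero hcomm h₁ h₂⟩ <;>
  simp [E₁, E₂, polyD₁, polyD₂, mkDerivation_X]

/-- On the elliptic surface
`y² + t⁶y + x³ + (t² + t⁶)x + t⁷ = 0` over `Spec k[t]` (char 2), with the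
chart `t ≠ 0` realized by adjoining `s = t⁻¹`, there are derivations
`D₁, D₂` of the coordinate ring with `D₁x = 0`, `D₁y = t²`, `D₁t = t²` and
`D₂x = t⁴`, `D₂y = t⁻²(x² + t⁶)`, `D₂t = 1`; they commute, satisfy
`D₁² = D₂² = 0`, and hence every combination `D = e₁D₁ + e₂D₂` satisfies
`D² = 0`.  Here variables are `x = X 0`, `y = X 1`, `t = X 2`, `s = X 3`
with relation `t·s = 1`. -/
theorem stmt_16 {k : Type*} [Field k] [IsAlgClosed k] [CharP k 2]
    (xq yq tq sq :
      MvPolynomial (Fin 4) k ⧸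
        Ideal.span {(X 1 : MvPolynomial (Fin 4) k) ^ 2 + (X 2) ^ 6 * (X 1) + (X 0) ^ 3 +
          ((X 2) ^ 2 + (X 2) ^ 6) * (X 0) + (X 2) ^ 7, (X 2) * (X 3) - 1})
    (hx : xq = Ideal.Quotient.mk _ (X 0))
    (hy : yq = Ideal.Quotient.mk _ (X 1))
    (ht : tq = Ideal.Quotient.mk _ (X 2))
    (hs : sq = Ideal.Quotient.mk _ (X 3)) :
    ∃ D₁ D₂ :
      Derivation k
        (MvPolynomial (Fin 4) k ⧸
          Ideal.span {(X 1 : MvPolynomial (Fin 4) k) ^ 2 + (X 2) ^ 6 * (X 1) + (X 0) ^ 3 +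
            ((X 2) ^ 2 + (X 2) ^ 6) * (X 0) + (X 2) ^ 7, (X 2) * (X 3) - 1})
        (MvPolynomial (Fin 4) k ⧸
          Ideal.span {(X 1 : MvPolynomial (Fin 4) k) ^ 2 + (X 2) ^ 6 * (X 1) + (X 0) ^ 3 +
            ((X 2) ^ 2 + (X 2) ^ 6) * (X 0) + (X 2) ^ 7, (X 2) * (X 3) - 1}),
      D₁ xq = 0 ∧ D₁ yq = tq ^ 2 ∧ D₁ tq = tq ^ 2 ∧
      D₂ xq = tq ^ 4 ∧ D₂ yq = sq ^ 2 * (xq ^ 2 + tq ^ 6) ∧ D₂ tq = 1 ∧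
      (∀ b, D₁ (D₂ b) = D₂ (D₁ b)) ∧
      (∀ b, D₁ (D₁ b) = 0) ∧ (∀ b, D₂ (D₂ b) = 0) ∧
      (∀ e₁ e₂ : k, ∀ b,
        (e₁ • D₁ + e₂ • D₂) ((e₁ • D₁ + e₂ • D₂) b) = 0) :=
  stmt_16_general xq yq tq sq hx hy ht hs
end

section
/- Let k be algebraically closed of characteristic 2 and let B̄ = k[x_1,…,y_3] with the three quadric relations x_1^2 + x_3^2 + y_1^2 + x_2 y_3 + x_3 y_2 = 0, x_2^2 + y_1^2 + y_3^2 + x_1 y_3 + x_3 y_1 = 0, y_2^2 + x_1 y_2 + x_2 y_1 = 0 (defining the surface Ȳ ⊂ P^5). Define derivations D_1 and D_2 by D_1(x_i) = 0, D_1(y_i) = x_i and D_2(x_i) = y_i, D_2(y_i) = 0 for i = 1,2,3. Then D_1 and D_2 preserve the ideal generated by the three quadrics (i.e., map each quadric into the ideal), and satisfy D_1^2 = 0 and D_2^2 = 0. -/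
open MvPolynomial

lemma aux_sq_D {k : Type*} [Field k] [CharP k 2]
    (D : Derivation k (MvPolynomial (Fin 6) k) (MvPolynomial (Fin 6) k))
    (hX : ∀ i : Fin 6, D (D (X i : MvPolynomial (Fin 6) k)) = 0) :
    ∀ f, D (D f) = 0 := by
  haveI : CharP (MvPolynomial (Fin 6) k) 2 := inferInstance
  intro f
  induction f using MvPolynomial.induction_on with
  | C a => simp
  | add p q hp hq => simp [hp, hq]
  | mul_X p i hp =>
      rw [D.leibniz, smul_eq_mul, smul_eq_mul, map_add, D.leibniz, D.leibniz,
        hp, hX]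
      simp only [smul_eq_mul, mul_zero, zero_add, add_zero]
      rw [mul_comm (D (X i)) (D p), ← two_mul,
        show ((2 : MvPolynomial (Fin 6) k)) = 0 from by
          exact_mod_cast CharP.cast_eq_zero (MvPolynomial (Fin 6) k) 2,
        zero_mul]

/-- On `k[x₁,x₂,x₃,y₁,y₂,y₃]` (char 2; here `xᵢ = X (i−1)`,
`yᵢ = X (i+2)`), the derivations `D₁` (with `D₁xᵢ = 0`, `D₁yᵢ = xᵢ`) and
`D₂` (with `D₂xᵢ = yᵢ`, `D₂yᵢ = 0`) map each of the three quadrics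
`q₁ = x₁² + x₃² + y₁² + x₂y₃ + x₃y₂`,
`q₂ = x₂² + y₁² + y₃² + x₁y₃ + x₃y₁`,
`q₃ = y₂² + x₁y₂ + x₂y₁` into the ideal they generate, and satisfy
`D₁² = 0` and `D₂² = 0`. -/
theorem stmt_17 {k : Type*} [Field k] [IsAlgClosed k] [CharP k 2]
    (D₁ D₂ : Derivation k (MvPolynomial (Fin 6) k) (MvPolynomial (Fin 6) k))
    (hD₁ : D₁ = MvPolynomial.mkDerivation k ![0, 0, 0, X 0, X 1, X 2])
    (hD₂ : D₂ = MvPolynomial.mkDerivation k ![X 3, X 4, X 5, 0, 0, 0])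
    (q₁ q₂ q₃ : MvPolynomial (Fin 6) k)
    (hq₁ : q₁ = (X 0) ^ 2 + (X 2) ^ 2 + (X 3) ^ 2 + (X 1) * (X 5) + (X 2) * (X 4))
    (hq₂ : q₂ = (X 1) ^ 2 + (X 3) ^ 2 + (X 5) ^ 2 + (X 0) * (X 5) + (X 2) * (X 3))
    (hq₃ : q₃ = (X 4) ^ 2 + (X 0) * (X 4) + (X 1) * (X 3)) :
    (D₁ q₁ ∈ Ideal.span {q₁, q₂, q₃} ∧ D₁ q₂ ∈ Ideal.span {q₁, q₂, q₃} ∧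
      D₁ q₃ ∈ Ideal.span {q₁, q₂, q₃}) ∧
    (D₂ q₁ ∈ Ideal.span {q₁, q₂, q₃} ∧ D₂ q₂ ∈ Ideal.span {q₁, q₂, q₃} ∧
      D₂ q₃ ∈ Ideal.span {q₁, q₂, q₃}) ∧
    (∀ f, D₁ (D₁ f) = 0) ∧ (∀ f, D₂ (D₂ f) = 0) := by
  haveI : CharP (MvPolynomial (Fin 6) k) 2 := inferInstance
  have two0 : (2 : MvPolynomial (Fin 6) k) = 0 := by
    exact_mod_cast CharP.cast_eq_zero (MvPolynomial (Fin 6) k) 2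
  have a0 : D₁ (X 0) = 0 := by rw [hD₁, mkDerivation_X]; rfl
  have a1 : D₁ (X 1) = 0 := by rw [hD₁, mkDerivation_X]; rfl
  have a2 : D₁ (X 2) = 0 := by rw [hD₁, mkDerivation_X]; rfl
  have a3 : D₁ (X 3) = X 0 := by rw [hD₁, mkDerivation_X]; rfl
  have a4 : D₁ (X 4) = X 1 := by rw [hD₁, mkDerivation_X]; rfl
  have a5 : D₁ (X 5) = X 2 := by rw [hD₁, mkDerivation_X]; rfl
  have b0 : D₂ (X 0) = X 3 := by rw [hD₂, mkDerivation_X]; rfl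
  have b1 : D₂ (X 1) = X 4 := by rw [hD₂, mkDerivation_X]; rfl
  have b2 : D₂ (X 2) = X 5 := by rw [hD₂, mkDerivation_X]; rfl
  have b3 : D₂ (X 3) = 0 := by rw [hD₂, mkDerivation_X]; rfl
  have b4 : D₂ (X 4) = 0 := by rw [hD₂, mkDerivation_X]; rfl
  have b5 : D₂ (X 5) = 0 := by rw [hD₂, mkDerivation_X]; rfl
  have key : ∀ (D : Derivation k (MvPolynomial (Fin 6) k) (MvPolynomial (Fin 6) k))
      (a b : MvPolynomial (Fin 6) k), D (a ^ 2) = 2 * (a * D a) ∧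
        D (a * b) = a * D b + b * D a := by
    intro D a b
    refine ⟨?_, ?_⟩
    · rw [pow_two, D.leibniz]; simp only [smul_eq_mul]; ring
    · rw [D.leibniz]; simp only [smul_eq_mul]
  have Dq : ∀ (D : Derivation k (MvPolynomial (Fin 6) k) (MvPolynomial (Fin 6) k)),
      D q₁ = 2 * ((X 0) * D (X 0)) + 2 * ((X 2) * D (X 2)) + 2 * ((X 3) * D (X 3))
        + ((X 1) * D (X 5) + (X 5) * D (X 1)) + ((X 2) * D (X 4) + (X 4) * D (X 2)) := by
    intro D
    rw [hq₁]
    simp only [map_add, (key D (X 0) (X 0)).1, (key D (X 2) (X 2)).1,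
      (key D (X 3) (X 3)).1, (key D (X 1) (X 5)).2, (key D (X 2) (X 4)).2]
  have Dq2 : ∀ (D : Derivation k (MvPolynomial (Fin 6) k) (MvPolynomial (Fin 6) k)),
      D q₂ = 2 * ((X 1) * D (X 1)) + 2 * ((X 3) * D (X 3)) + 2 * ((X 5) * D (X 5))
        + ((X 0) * D (X 5) + (X 5) * D (X 0)) + ((X 2) * D (X 3) + (X 3) * D (X 2)) := by
    intro D
    rw [hq₂]
    simp only [map_add, (key D (X 1) (X 1)).1, (key D (X 3) (X 3)).1,
      (key D (X 5) (X 5)).1, (key D (X 0) (X 5)).2, (key D (X 2) (X 3)).2]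
  have Dq3 : ∀ (D : Derivation k (MvPolynomial (Fin 6) k) (MvPolynomial (Fin 6) k)),
      D q₃ = 2 * ((X 4) * D (X 4))
        + ((X 0) * D (X 4) + (X 4) * D (X 0)) + ((X 1) * D (X 3) + (X 3) * D (X 1)) := by
    intro D
    rw [hq₃]
    simp only [map_add, (key D (X 4) (X 4)).1, (key D (X 0) (X 4)).2,
      (key D (X 1) (X 3)).2]
  have e11 : D₁ q₁ = 0 := by
    rw [Dq D₁, a0, a1, a2, a3, a4, a5]
    linear_combination (X 3 * X 0 + X 1 * X 2 : MvPolynomial (Fin 6) k) * two0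
  have e12 : D₁ q₂ = 0 := by
    rw [Dq2 D₁, a0, a1, a2, a3, a5]
    linear_combination (X 3 * X 0 + X 5 * X 2 + X 0 * X 2 : MvPolynomial (Fin 6) k) * two0
  have e13 : D₁ q₃ = 0 := by
    rw [Dq3 D₁, a0, a1, a3, a4]
    linear_combination (X 4 * X 1 + X 0 * X 1 : MvPolynomial (Fin 6) k) * two0
  have e21 : D₂ q₁ = 0 := by
    rw [Dq D₂, b0, b1, b2, b3, b4, b5]
    linear_combination (X 0 * X 3 + X 2 * X 5 + X 5 * X 4 : MvPolynomial (Fin 6) k) * two0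
  have e22 : D₂ q₂ = 0 := by
    rw [Dq2 D₂, b0, b2, b1, b3, b5]
    linear_combination (X 1 * X 4 + X 5 * X 3 : MvPolynomial (Fin 6) k) * two0
  have e23 : D₂ q₃ = 0 := by
    rw [Dq3 D₂, b0, b1, b3, b4]
    linear_combination (X 4 * X 3 : MvPolynomial (Fin 6) k) * two0
  refine ⟨⟨?_, ?_, ?_⟩, ⟨?_, ?_, ?_⟩, ?_, ?_⟩
  · rw [e11]; exact Ideal.zero_mem _
  · rw [e12]; exact Ideal.zero_mem _
  · rw [e13]; exact Ideal.zero_mem _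
  · rw [e21]; exact Ideal.zero_mem _
  · rw [e22]; exact Ideal.zero_mem _
  · rw [e23]; exact Ideal.zero_mem _
  · refine aux_sq_D D₁ ?_
    intro i
    fin_cases i <;> simp [a0, a1, a2, a3, a4, a5]
  · refine aux_sq_D D₂ ?_
    intro i
    fin_cases i <;> simp [b0, b1, b2, b3, b4, b5]
end
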